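/- Let q = 2^ℓ, let 0 ≤ k < q^2 with k = wq + z, z < q. Suppose either w = 0, or there exists 1 ≤ i ≤ ℓ with w ≡ 0 (mod 2^i) and z ≢ −1 (mod 2^i). Then for every α, β ∈ F_{q^2} such that p_{α,β}(t) = t^{q+1} + α^q t^q + α t + (β + β^q) has q+1 distinct roots in F_{q^2}, the remainder of t^k upon division by p_{α,β} has degree strictly less than q. -/

import Mathlib

/-!
Since `p_{α,β}` has `q + 1` simple roots `s`, the coefficient of `t^q` in `t^k mod p_{α,β}` is
`∑_{x ∈ s} x^k / p'(x)`, and in characteristic 2 we have `p'(x) = x^q + α =: u`. For a root `x`,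
`u^(q+1) = c := α^(q+1) + β + β^q` and `x = (u + α)^q`, so the sum equals
`c⁻¹ (∑_u (u + α)^k u)^q` with `u` running over all `(q+1)`-st roots of `c`. Expanding, the power
sums `∑ u^(j+1)` vanish unless `q + 1 ∣ j + 1`, and for those `j` Lucas's theorem and the
hypothesis on the base-`q` digits `w, z` of `k` make `k.choose j` even.
-/

open Polynomial Finset

theorem Choose.choose_modEq_choose_mod_pow_mul_choose_div_pow_nat (p : ℕ) [Fact p.Prime]
    (n k i : ℕ) :
    n.choose k ≡ (n % p ^ i).choose (k % p ^ i) * (n / p ^ i).choose (k / p ^ i) [MOD p] := by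
  induction i generalizing n k with
  | zero => simpa [Nat.mod_one] using Nat.ModEq.refl _
  | succ i ih =>
    have hlow := ih (n % p ^ (i + 1)) (k % p ^ (i + 1))
    have hdvd : p ^ i ∣ p ^ (i + 1) := pow_dvd_pow p i.le_succ
    rw [Nat.mod_mod_of_dvd _ hdvd, Nat.mod_mod_of_dvd _ hdvd, pow_succ,
      Nat.mod_mul_right_div_self, Nat.mod_mul_right_div_self] at hlow
    have hhigh := choose_modEq_choose_mod_mul_choose_div_nat (p := p) (n := n / p ^ i)
      (k := k / p ^ i)
    rw [Nat.div_div_eq_div_mul, Nat.div_div_eq_div_mul] at hhigh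
    rw [pow_succ]
    calc n.choose k
        ≡ (n % p ^ i).choose (k % p ^ i) * (n / p ^ i).choose (k / p ^ i) [MOD p] := ih n k
      _ ≡ (n % p ^ i).choose (k % p ^ i) * ((n / p ^ i % p).choose (k / p ^ i % p) *
            (n / (p ^ i * p)).choose (k / (p ^ i * p))) [MOD p] := hhigh.mul_left _
      _ ≡ (n % (p ^ i * p)).choose (k % (p ^ i * p)) * (n / (p ^ i * p)).choose (k / (p ^ i * p))
            [MOD p] := by rw [← mul_assoc]; exact (hlow.mul_right _).symm

theorem Nat.odd_choose_iff_odd_choose_mod_two_pow_and_div_two_pow (n k i : ℕ) :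
    Odd (n.choose k) ↔
      Odd ((n % 2 ^ i).choose (k % 2 ^ i)) ∧ Odd ((n / 2 ^ i).choose (k / 2 ^ i)) := by
  have := Fact.mk Nat.prime_two
  rw [← Nat.odd_mul, Nat.odd_iff, Nat.odd_iff,
    Choose.choose_modEq_choose_mod_pow_mul_choose_div_pow_nat 2 n k i]

theorem Nat.odd_choose_mul_two_pow_add_iff {i w z m y : ℕ} (hz : z < 2 ^ i) (hy : y < 2 ^ i) :
    Odd ((w * 2 ^ i + z).choose (m * 2 ^ i + y)) ↔ Odd (z.choose y) ∧ Odd (w.choose m) := by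
  have hpos := Nat.two_pow_pos i
  rw [Nat.odd_choose_iff_odd_choose_mod_two_pow_and_div_two_pow _ _ i, add_comm _ z,
    add_comm _ y, Nat.add_mul_mod_self_right, Nat.add_mul_mod_self_right, Nat.mod_eq_of_lt hz,
    Nat.mod_eq_of_lt hy, Nat.add_mul_div_right _ _ hpos, Nat.add_mul_div_right _ _ hpos,
    Nat.div_eq_of_lt hz, Nat.div_eq_of_lt hy, zero_add, zero_add]

theorem Nat.le_of_odd_choose {n k : ℕ} (h : Odd (n.choose k)) : k ≤ n := by
  by_contra hlt
  rw [Nat.choose_eq_zero_of_lt (by omega)] at h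
  exact Nat.not_odd_zero h

theorem Nat.sub_one_mod_eq_of_mod_eq_zero {m d : ℕ} (hm : m ≠ 0) (h : m % d = 0) :
    (m - 1) % d = d - 1 := by
  obtain ⟨e, rfl⟩ := Nat.dvd_of_mod_eq_zero h
  obtain _ | e := e
  · simp at hm
  have hd : d ≠ 0 := by rintro rfl; simp at hm
  rw [show d * (e + 1) - 1 = d - 1 + d * e by rw [Nat.mul_succ]; omega,
    Nat.add_mul_mod_self_left, Nat.mod_eq_of_lt (by omega)]

theorem Nat.even_choose_of_dvd_add_one {ℓ q k w z j : ℕ} (hq : q = 2 ^ ℓ) (hk : k < q ^ 2)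
    (hkwz : k = w * q + z) (hz : z < q)
    (hcond : w = 0 ∨ ∃ i, w % 2 ^ i = 0 ∧ z % 2 ^ i ≠ 2 ^ i - 1) (hj : q + 1 ∣ j + 1) :
    Even (k.choose j) := by
  -- In base `q`, `j = m q + (m - 1)`; Lucas makes `m` a digitwise submask of `w` and `m - 1` one
  -- of `z`, and `2^i ∣ w` then forces `z ≡ -1 (mod 2^i)`.
  subst hq
  by_contra hodd
  rw [Nat.not_even_iff_odd] at hodd
  obtain ⟨m, hm⟩ := hj
  have hm0 : m ≠ 0 := by rintro rfl; simp at hm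
  have hmq : m < 2 ^ ℓ := by nlinarith [Nat.le_of_odd_choose hodd]
  have hjm : j = m * 2 ^ ℓ + (m - 1) := by
    have : j + 1 = m * 2 ^ ℓ + m := by rw [hm]; ring
    omega
  rw [hkwz, hjm, Nat.odd_choose_mul_two_pow_add_iff hz (by omega)] at hodd
  obtain ⟨hzm, hwm⟩ := hodd
  rcases hcond with rfl | ⟨i, hwi, hzi⟩
  · exact hm0 (Nat.le_zero.mp (Nat.le_of_odd_choose hwm))
  · have hmi : m % 2 ^ i = 0 := by
      have := ((Nat.odd_choose_iff_odd_choose_mod_two_pow_and_div_two_pow _ _ i).mp hwm).1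
      rw [hwi] at this
      exact Nat.le_zero.mp (Nat.le_of_odd_choose this)
    have := ((Nat.odd_choose_iff_odd_choose_mod_two_pow_and_div_two_pow _ _ i).mp hzm).1
    rw [Nat.sub_one_mod_eq_of_mod_eq_zero hm0 hmi] at this
    have := Nat.le_of_odd_choose this
    have := Nat.mod_lt z (Nat.two_pow_pos i)
    omega

theorem FiniteField.pow_pow_eq_self_of_card_eq_sq {F : Type*} [Field F] [Fintype F] {q : ℕ}
    (hF : Fintype.card F = q ^ 2) (x : F) : (x ^ q) ^ q = x := by
  rw [← pow_mul, ← sq, ← hF, FiniteField.pow_card]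

theorem FiniteField.exists_isPrimitiveRoot_of_dvd_card_sub_one {K : Type*} [Field K] [Fintype K]
    {n : ℕ} (hn : n ∣ Fintype.card K - 1) : ∃ ζ : K, IsPrimitiveRoot ζ n := by
  classical
  obtain ⟨g, hg⟩ := IsCyclic.exists_generator (α := Kˣ)
  have hprim : IsPrimitiveRoot g (Fintype.card K - 1) := by
    rw [← Fintype.card_units, ← Nat.card_eq_fintype_card,
      ← orderOf_eq_card_of_forall_mem_zpowers hg]
    exact IsPrimitiveRoot.orderOf g
  obtain ⟨d, hd⟩ := hn
  have hd0 : d ≠ 0 := by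
    rintro rfl
    have := Fintype.one_lt_card (α := K)
    omega
  have hpow := hprim.pow_of_dvd hd0 (Dvd.intro_left n hd.symm)
  rw [hd, Nat.mul_div_cancel _ (Nat.pos_of_ne_zero hd0)] at hpow
  exact ⟨_, IsPrimitiveRoot.coe_units_iff.mpr hpow⟩

theorem inv_eq_pow_mul_inv_pow_succ {K : Type*} [DivisionRing K] (u : K) {n : ℕ} (hn : n ≠ 0) :
    u⁻¹ = u ^ n * (u ^ (n + 1))⁻¹ := by
  rcases eq_or_ne u 0 with rfl | hu
  · simp [hn]
  · rw [pow_succ', mul_inv_rev, ← mul_assoc, mul_inv_cancel₀ (pow_ne_zero n hu), one_mul]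

theorem Finset.sum_pow_eq_zero_of_forall_pow_eq {K : Type*} [Field K] {t : Finset K} {n m : ℕ}
    {c ζ : K} (hζ : IsPrimitiveRoot ζ n) (ht : #t = n) (hc : ∀ v ∈ t, v ^ n = c)
    (hm : ¬ n ∣ m) : ∑ v ∈ t, v ^ m = 0 := by
  obtain rfl | ⟨v₀, hv₀⟩ := t.eq_empty_or_nonempty
  · simp
  have hn : n ≠ 0 := by rintro rfl; simp_all
  have hroots : t.val = nthRoots n c := by
    refine Multiset.eq_of_le_of_card_le ((Multiset.le_iff_subset t.nodup).mpr fun v hv => ?_) ?_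
    · exact (mem_nthRoots (Nat.pos_of_ne_zero hn)).mpr (hc v hv)
    · simpa [ht] using card_nthRoots n c
  have hζm : ζ ^ m ≠ 1 := fun h => hm ((hζ.pow_eq_one_iff_dvd m).mp h)
  calc ∑ v ∈ t, v ^ m = ∑ i ∈ range n, (ζ ^ i * v₀) ^ m := by
        rw [Finset.sum_eq_multiset_sum, hroots, hζ.nthRoots_eq (hc v₀ hv₀), Multiset.map_map]
        rfl
    _ = v₀ ^ m * ∑ i ∈ range n, (ζ ^ m) ^ i := by
        rw [mul_sum]; exact sum_congr rfl fun i _ => by ring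
    _ = 0 := by
        rw [geom_sum_eq hζm, ← pow_mul, mul_comm m n, pow_mul, hζ.pow_eq_one, one_pow, sub_self,
          zero_div, mul_zero]

theorem Finset.sum_add_pow_mul_self_eq_zero_of_forall_pow_eq {K : Type*} [Field K] {t : Finset K}
    {n k : ℕ} {c ζ : K} (hζ : IsPrimitiveRoot ζ n) (ht : #t = n) (hc : ∀ v ∈ t, v ^ n = c)
    (hchoose : ∀ j, n ∣ j + 1 → (k.choose j : K) = 0) (a : K) :
    ∑ v ∈ t, (v + a) ^ k * v = 0 := by
  simp_rw [add_pow, sum_mul]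
  rw [sum_comm]
  refine sum_eq_zero fun j _ => ?_
  by_cases hj : n ∣ j + 1
  · simp [hchoose j hj]
  · calc ∑ v ∈ t, v ^ j * a ^ (k - j) * (k.choose j : K) * v
          = a ^ (k - j) * (k.choose j : K) * ∑ v ∈ t, v ^ (j + 1) := by
            rw [mul_sum]; exact sum_congr rfl fun v _ => by ring
      _ = 0 := by rw [sum_pow_eq_zero_of_forall_pow_eq hζ ht hc hj, mul_zero]

theorem Polynomial.eq_nodal_of_monic_of_eval_eq_zero {K : Type*} [Field K] {p : K[X]} {s : Finset K}
    (hp : p.Monic) (hs : #s = p.natDegree) (hroots : ∀ x ∈ s, p.eval x = 0) :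
    p = Lagrange.nodal s id := by
  refine eq_of_degree_sub_lt_of_eval_finset_eq s ?_ fun x hx => ?_
  · rw [hs, ← degree_eq_natDegree hp.ne_zero]
    refine degree_sub_lt_left ?_ hp.ne_zero ?_
    · rw [Lagrange.degree_nodal, degree_eq_natDegree hp.ne_zero, hs]
    · rw [hp.leadingCoeff, (Lagrange.nodal_monic).leadingCoeff]
  · exact (hroots x hx).trans (Lagrange.eval_nodal_at_node (v := id) hx).symm

theorem Polynomial.coeff_modByMonic_card_sub_one {K : Type*} [Field K] {P : K[X]}
    {s : Finset K} (hP : P.Monic) (hs : #s = P.natDegree) (hroots : ∀ x ∈ s, P.eval x = 0)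
    (p : K[X]) :
    (p %ₘ P).coeff (#s - 1) = ∑ x ∈ s, p.eval x / (derivative P).eval x := by
  classical
  have hnodal := eq_nodal_of_monic_of_eval_eq_zero hP hs hroots
  have hdeg : (p %ₘ P).degree < #s := by
    rw [hs, ← degree_eq_natDegree hP.ne_zero]
    exact degree_modByMonic_lt p hP
  rw [Lagrange.coeff_eq_sum (Set.injOn_id _) hdeg]
  refine sum_congr rfl fun x hx => ?_
  have hderiv := Lagrange.eval_nodal_derivative_eval_node_eq (v := id) hx
  rw [Lagrange.eval_nodal, ← hnodal] at hderiv
  rw [id, modByMonic_eq_sub_mul_div, eval_sub, eval_mul, hroots x hx, zero_mul, sub_zero]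
  exact congrArg (p.eval x / ·) hderiv.symm

theorem Polynomial.degree_lt_of_coeff_eq_zero {R : Type*} [Semiring R] {p : R[X]} {n : ℕ}
    (hp : p.degree < ↑(n + 1)) (hn : p.coeff n = 0) : p.degree < n :=
  lt_of_le_of_ne (Order.le_of_lt_succ hp) fun h => coeff_ne_zero_of_eq_degree h hn

/-- `p_{α,β}`: the line `(α t + β, t)` substituted into `x^q + x = y^(q+1)`, in characteristic 2. -/
noncomputable def hermitianLinePoly {F : Type*} [Field F] (q : ℕ) (α β : F) : F[X] :=
  X ^ (q + 1) + C (α ^ q) * X ^ q + C α * X + C (β + β ^ q)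

namespace hermitianLinePoly

section

variable {F : Type*} [Field F] {q : ℕ} (α β : F)

theorem natDegree_eq (hq : q ≠ 0) : (hermitianLinePoly q α β).natDegree = q + 1 := by
  unfold hermitianLinePoly
  compute_degree!
  simp [hq]

theorem monic (hq : q ≠ 0) : (hermitianLinePoly q α β).Monic := by
  unfold hermitianLinePoly
  monicity!
  simp [hq]

theorem derivative_eq [CharP F 2] (hq : Even q) :
    derivative (hermitianLinePoly q α β) = X ^ q + C α := by
  have hqF : (q : F) = 0 := (CharP.cast_eq_zero_iff F 2 q).mpr hq.two_dvd
  simp [hermitianLinePoly, derivative_X_pow, hqF, -map_pow]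

end

section FiniteField

variable {F : Type*} [Field F] [Fintype F] [CharP F 2] {ℓ q : ℕ} {α β : F}

theorem pow_succ_eq_of_eval_eq_zero (hq : q = 2 ^ ℓ) (hF : Fintype.card F = q ^ 2) {x : F}
    (hx : (hermitianLinePoly q α β).eval x = 0) :
    (x ^ q + α) ^ (q + 1) = α ^ (q + 1) + β + β ^ q := by
  have hfrob : (x ^ q + α) ^ q = x + α ^ q := by
    rw [hq, add_pow_char_pow (R := F), ← hq, FiniteField.pow_pow_eq_self_of_card_eq_sq hF]
  simp only [hermitianLinePoly, eval_add, eval_pow, eval_X, eval_mul, eval_C] at hx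
  rw [pow_succ, hfrob]
  linear_combination hx - (β + β ^ q) * CharTwo.two_eq_zero (R := F)

theorem sum_pow_div_eq_zero (hq : q = 2 ^ ℓ) (hF : Fintype.card F = q ^ 2) {s : Finset F}
    (hs : #s = q + 1) (hroots : ∀ x ∈ s, (hermitianLinePoly q α β).eval x = 0) {k : ℕ}
    (hchoose : ∀ j, q + 1 ∣ j + 1 → (k.choose j : F) = 0) :
    ∑ x ∈ s, x ^ k / (x ^ q + α) = 0 := by
  classical
  have hq0 : q ≠ 0 := hq ▸ pow_ne_zero ℓ two_ne_zero
  have hfrob := FiniteField.pow_pow_eq_self_of_card_eq_sq hF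
  set u : F → F := fun x => x ^ q + α with hu
  set c := α ^ (q + 1) + β + β ^ q
  have hinj : Set.InjOn u s := fun x _ y _ hxy => by
    rw [← hfrob x, ← hfrob y, add_right_cancel hxy]
  obtain ⟨ζ, hζ⟩ := FiniteField.exists_isPrimitiveRoot_of_dvd_card_sub_one (K := F)
    (n := q + 1) ⟨q - 1, by rw [hF, ← Nat.sq_sub_sq, one_pow, sq]⟩
  have hterm : ∀ x ∈ s, x ^ k / u x = c⁻¹ * ((u x + α) ^ k * u x) ^ q := fun x hx => by
    have hux : u x + α = x ^ q := by rw [hu, add_assoc, CharTwo.add_self_eq_zero, add_zero]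
    rw [div_eq_mul_inv, inv_eq_pow_mul_inv_pow_succ (u x) hq0,
      pow_succ_eq_of_eval_eq_zero hq hF (hroots x hx), hux, mul_pow, ← pow_mul, mul_comm k q,
      pow_mul, hfrob]
    ring
  calc ∑ x ∈ s, x ^ k / (x ^ q + α)
      = c⁻¹ * (∑ x ∈ s, (u x + α) ^ k * u x) ^ q := by
        rw [sum_congr rfl hterm, ← mul_sum, hq, sum_pow_char_pow]
    _ = c⁻¹ * (∑ v ∈ s.image u, (v + α) ^ k * v) ^ q := by rw [sum_image hinj]
    _ = 0 := by
        have hpow : ∀ v ∈ s.image u, v ^ (q + 1) = c := by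
          simp only [mem_image, forall_exists_index, and_imp, forall_apply_eq_imp_iff₂]
          exact fun x hx => pow_succ_eq_of_eval_eq_zero hq hF (hroots x hx)
        rw [sum_add_pow_mul_self_eq_zero_of_forall_pow_eq hζ
          (by rw [card_image_of_injOn hinj, hs]) hpow hchoose α, zero_pow hq0, mul_zero]

end FiniteField

end hermitianLinePoly

/-- If `k = wq + z` with `z < q`, and either `w = 0` or there is `1 ≤ i ≤ ℓ` with
`w ≡ 0 (mod 2^i)` and `z ≢ -1 (mod 2^i)`, then for every non-tangent line (i.e. whenever
`p_{α,β}` has `q+1` distinct roots in `F_{q^2}`), the remainder of `t^k` modulo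
`p_{α,β}(t) = t^(q+1) + α^q t^q + α t + (β + β^q)` has degree strictly less than `q`. -/
theorem stmt_13 {ℓ q : ℕ} (hq : q = 2 ^ ℓ) (hℓ : 1 ≤ ℓ) {F : Type*} [Field F] [Fintype F]
    (hF : Fintype.card F = q ^ 2) (k w z : ℕ) (hk : k < q ^ 2) (hkwz : k = w * q + z)
    (hz : z < q)
    (hcond : w = 0 ∨ ∃ i, 1 ≤ i ∧ i ≤ ℓ ∧ w % 2 ^ i = 0 ∧ z % 2 ^ i ≠ 2 ^ i - 1)
    (α β : F)
    (hroots : ∃ s : Finset F, s.card = q + 1 ∧ ∀ x ∈ s,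
      Polynomial.eval x
        (X ^ (q + 1) + C (α ^ q) * X ^ q + C α * X + C (β + β ^ q) : F[X]) = 0) :
    ((X ^ k : F[X]) %ₘ (X ^ (q + 1) + C (α ^ q) * X ^ q + C α * X + C (β + β ^ q))).degree
      < (q : ℕ) := by
  obtain ⟨s, hs, hroots⟩ := hroots
  change ((X ^ k : F[X]) %ₘ hermitianLinePoly q α β).degree < q
  replace hroots : ∀ x ∈ s, (hermitianLinePoly q α β).eval x = 0 := hroots
  have hq0 : q ≠ 0 := hq ▸ pow_ne_zero ℓ two_ne_zero
  have hq2 : Even q := hq ▸ Nat.even_pow.mpr ⟨even_two, by omega⟩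
  have : CharP F 2 := ringChar.of_eq <| FiniteField.even_card_iff_char_two.mpr <| by
    rw [hF, Nat.even_iff.mp (hq2.pow_of_ne_zero two_ne_zero)]
  have hmonic := hermitianLinePoly.monic α β hq0
  have hdeg := hermitianLinePoly.natDegree_eq α β hq0
  have hcoeff := coeff_modByMonic_card_sub_one hmonic (hs.trans hdeg.symm) hroots (X ^ k)
  rw [hs, Nat.add_sub_cancel, hermitianLinePoly.derivative_eq α β hq2] at hcoeff
  simp only [eval_pow, eval_X, eval_add, eval_C] at hcoeff
  refine degree_lt_of_coeff_eq_zero ?_ (hcoeff.trans ?_)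
  · simpa [degree_eq_natDegree hmonic.ne_zero, hdeg] using degree_modByMonic_lt (X ^ k) hmonic
  refine hermitianLinePoly.sum_pow_div_eq_zero hq hF hs hroots fun j hj =>
    (CharP.cast_eq_zero_iff F 2 _).mpr (Nat.even_choose_of_dvd_add_one hq hk hkwz hz
      (hcond.imp_right fun ⟨i, _, _, hwi, hzi⟩ => ⟨i, hwi, hzi⟩) hj).two_dvd
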